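/- arXiv:1712.08386 — 3 statements merged into one kernel-verified Lean document; each statement's English description precedes it below -/
import Mathlib

section
/- Let (X,d) be a δ-hyperbolic space. For all R, R' > 0 and all points x, y ∈ X with d(x,y) < R + R', there exists a point y' ∈ X such that B(x,R) ∩ B(y,R') ⊆ B(y', r), where r = min( R, R', ½(R + R' − d(x,y)) + 2δ ). -/
open Metric Filter Set
open scoped Classical ENNReal

noncomputable section

/-- The Gromov product `(x|y)_w`. -/
def gromovProd {X : Type*} [MetricSpace X] (w x y : X) : ℝ :=
  (dist w x + dist w y - dist x y) / 2

/-- An arclength-parametrized geodesic segment from `x` to `y`,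
defined on `[0, dist x y]`. -/
def IsGeodesicSegment {X : Type*} [MetricSpace X] (f : ℝ → X) (x y : X) : Prop :=
  f 0 = x ∧ f (dist x y) = y ∧
    ∀ s ∈ Set.Icc (0 : ℝ) (dist x y), ∀ t ∈ Set.Icc (0 : ℝ) (dist x y),
      dist (f s) (f t) = |s - t|

/-- A δ-hyperbolic space: a proper geodesic metric space all of whose geodesic
triangles are δ-thin, in the sense that two points having the same image under the
comparison map onto the associated tripod are at distance at most δ.  (Two points
with the same tripod image lie on two sides issued from a common vertex `x`, at the
same arclength parameter `t ≤ (y|z)_x`.) -/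
def IsDeltaHyperbolic (X : Type*) [MetricSpace X] (δ : ℝ) : Prop :=
  ProperSpace X ∧
    (∀ x y : X, ∃ f : ℝ → X, IsGeodesicSegment f x y) ∧
    (∀ x y z : X, ∀ f g : ℝ → X, IsGeodesicSegment f x y → IsGeodesicSegment g x z →
      ∀ t : ℝ, 0 ≤ t → t ≤ gromovProd x y z → dist (f t) (g t) ≤ δ)

/-- A sequence converging to a point of the Gromov boundary: the Gromov products of
pairs of points of the sequence tend to `+∞`. -/
def IsGromovSeq {X : Type*} [MetricSpace X] (x₀ : X) (u : ℕ → X) : Prop :=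
  ∀ C : ℝ, ∃ N : ℕ, ∀ m n : ℕ, N ≤ m → N ≤ n → C ≤ gromovProd x₀ (u m) (u n)

/-- Two Gromov sequences define the same boundary point when their mutual Gromov
products tend to `+∞`. -/
def GromovSeqEquiv {X : Type*} [MetricSpace X] (x₀ : X) (u v : ℕ → X) : Prop :=
  ∀ C : ℝ, ∃ N : ℕ, ∀ m n : ℕ, N ≤ m → N ≤ n → C ≤ gromovProd x₀ (u m) (v n)

/-- The space is non-elementary: its Gromov boundary has at least three points. -/
def NonElementary (X : Type*) [MetricSpace X] : Prop :=
  ∃ (x₀ : X) (u v w : ℕ → X), IsGromovSeq x₀ u ∧ IsGromovSeq x₀ v ∧ IsGromovSeq x₀ w ∧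
    ¬ GromovSeqEquiv x₀ u v ∧ ¬ GromovSeqEquiv x₀ u w ∧ ¬ GromovSeqEquiv x₀ v w

/-- The action of `Γ` on `X` is by isometries. -/
def IsIsometricAction (Γ X : Type*) [Group Γ] [MetricSpace X] [MulAction Γ X] : Prop :=
  ∀ γ : Γ, Isometry fun x : X => γ • x

/-- The action of `Γ` on `X` is proper. -/
def IsProperAction (Γ X : Type*) [Group Γ] [MetricSpace X] [MulAction Γ X] : Prop :=
  ∀ (x : X) (R : ℝ), {γ : Γ | dist x (γ • x) ≤ R}.Finite

/-- `diam (Γ\X) ≤ D` for the quotient distance `d̄(Γx,Γy) = inf_γ d(x,γy)`. -/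
def CodiamLE (Γ X : Type*) [Group Γ] [MetricSpace X] [MulAction Γ X] (D : ℝ) : Prop :=
  ∀ x y : X, sInf {r : ℝ | ∃ γ : Γ, r = dist x (γ • y)} ≤ D

/-- The entropy of `(X,d)` endowed with a proper isometric action of `Γ`, computed with
the orbit counting measure `μ_xΓ = Σ_γ Dirac (γ • x)` (for a cocompact proper action this
is the common value of the entropies of all invariant measures). -/
def orbitEntropy (Γ : Type*) {X : Type*} [Group Γ] [MetricSpace X] [MulAction Γ X]
    (x : X) : ℝ :=
  liminf (fun R : ℝ => Real.log (Nat.card {γ : Γ // dist x (γ • x) < R}) / R) atTop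

/-- The stable (asymptotic) displacement `ℓ(γ) = lim d(x, γⁿ x)/n`
(the limit exists and is independent of `x`; it is expressed here as a `liminf`). -/
def stableDisp {Γ X : Type*} [Group Γ] [MetricSpace X] [MulAction Γ X] (γ : Γ) (x : X) : ℝ :=
  liminf (fun n : ℕ => dist x (γ ^ n • x) / (n : ℝ)) atTop

/-- The pointwise systole `sys_Γ(x) = inf {d(x,γx) : γ ≠ 1}`. -/
def ptSystole (Γ : Type*) {X : Type*} [Group Γ] [MetricSpace X] [MulAction Γ X] (x : X) : ℝ :=
  sInf {r : ℝ | ∃ γ : Γ, γ ≠ 1 ∧ r = dist x (γ • x)}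

/-- The global systole `Sys_Γ(X) = inf_x sys_Γ(x)`. -/
def globSystole (Γ X : Type*) [Group Γ] [MetricSpace X] [MulAction Γ X] : ℝ :=
  sInf {r : ℝ | ∃ x : X, r = ptSystole Γ x}

/-- The distance of `(X,d)` is convex: for any two affinely reparametrized geodesic
segments `c₁, c₂`, the function `t ↦ d(c₁(t), c₂(t))` is convex on `[0,1]`. -/
def ConvexDist (X : Type*) [MetricSpace X] : Prop :=
  ∀ (x y x' y' : X) (f g : ℝ → X), IsGeodesicSegment f x y → IsGeodesicSegment g x' y' →
    ConvexOn ℝ (Set.Icc (0 : ℝ) 1) fun t => dist (f (t * dist x y)) (g (t * dist x' y'))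

/-- `f` is a local geodesic on the set `s ⊆ ℝ`. -/
def IsLocalGeodesic {X : Type*} [MetricSpace X] (f : ℝ → X) (s : Set ℝ) : Prop :=
  ∀ t ∈ s, ∃ ε > (0 : ℝ), ∀ u ∈ s ∩ Set.Ioo (t - ε) (t + ε), ∀ v ∈ s ∩ Set.Ioo (t - ε) (t + ε),
    dist (f u) (f v) = |u - v|

/-- Every local geodesic defined on a nontrivial segment extends to a local geodesic
defined on all of `ℝ`. -/
def GeodesicallyComplete (X : Type*) [MetricSpace X] : Prop :=
  ∀ (a b : ℝ), a < b → ∀ f : ℝ → X, IsLocalGeodesic f (Set.Icc a b) →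
    ∃ g : ℝ → X, IsLocalGeodesic g Set.univ ∧ ∀ t ∈ Set.Icc a b, g t = f t

/-- The pair `(u,v)` generates a free sub-semigroup: two products of positive powers of
`u` and `v` coincide only when they coincide as words. -/
def FreeSemigroupPair {G : Type*} [Monoid G] (u v : G) : Prop :=
  Function.Injective ⇑(FreeMonoid.lift fun b : Bool => bif b then u else v)

/-- The pair `(u,v)` generates a free subgroup, free on `{u,v}`. -/
def FreeGroupPair {G : Type*} [Group G] (u v : G) : Prop :=
  Function.Injective ⇑(FreeGroup.lift fun b : Bool => bif b then u else v)

/-- A group is virtually cyclic if it has a cyclic subgroup of finite index. -/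
def VirtuallyCyclic (G : Type*) [Group G] : Prop :=
  ∃ H : Subgroup G, H.FiniteIndex ∧ IsCyclic ↥H

/-- The stable displacement of an isometry `g` of `X`. -/
def stableDispIso {X : Type*} [MetricSpace X] (g : X ≃ᵢ X) (x : X) : ℝ :=
  liminf (fun n : ℕ => dist x ((g ^ n) x) / (n : ℝ)) atTop

/-- The minimal displacement `s(g) = inf_x d(x, g x)` of an isometry `g` of `X`. -/
def minDisp {X : Type*} [MetricSpace X] (g : X ≃ᵢ X) : ℝ :=
  ⨅ x : X, dist x (g x)

/-- Discreteness of a subgroup of the isometry group of a proper metric space,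
expressed equivalently by the properness of its natural action. -/
def DiscreteIsomSubgroup {X : Type*} [MetricSpace X] (H : Subgroup (X ≃ᵢ X)) : Prop :=
  ∀ (x : X) (R : ℝ), {g : X ≃ᵢ X | g ∈ H ∧ dist x (g x) ≤ R}.Finite

/-- The Margulis constant `L(a,b)` of a pair of isometries. -/
def margulisConst {X : Type*} [MetricSpace X] (a b : X ≃ᵢ X) : ℝ :=
  sInf {r : ℝ | ∃ (x : X) (p q : ℤ), p ≠ 0 ∧ q ≠ 0 ∧ a ^ p ≠ 1 ∧ b ^ q ≠ 1 ∧
    r = max (dist x ((a ^ p) x)) (dist x ((b ^ q) x))}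

/-- Word length with respect to a generating set `S` (words in `S ∪ S⁻¹`). -/
def wordLength {Γ : Type*} [Group Γ] (S : Set Γ) (γ : Γ) : ℕ :=
  sInf {n : ℕ | ∃ l : List Γ, l.length = n ∧ (∀ s ∈ l, s ∈ S ∨ s⁻¹ ∈ S) ∧ l.prod = γ}

/-- The algebraic entropy `Ent(Γ,Σ)` of a group with respect to a generating set. -/
def algEntropy (Γ : Type*) [Group Γ] (S : Set Γ) : ℝ :=
  liminf (fun R : ℝ => Real.log (Nat.card {γ : Γ // (wordLength S γ : ℝ) ≤ R}) / R) atTop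

/-- `(C, ι)` is a metric realization of the Cayley graph of `(Γ,S)`: `Γ` acts on `C` by
isometries, `ι` is the equivariant vertex embedding, the distance between vertices is the
word distance, and every point of `C` is within distance `1/2` of a vertex. -/
def IsCayleyRealization (Γ : Type*) [Group Γ] (S : Set Γ) (C : Type*) [MetricSpace C]
    [MulAction Γ C] (ι : Γ → C) : Prop :=
  IsIsometricAction Γ C ∧
    (∀ γ g : Γ, ι (γ * g) = γ • ι g) ∧
    (∀ γ g : Γ, dist (ι γ) (ι g) = (wordLength S (γ⁻¹ * g) : ℝ)) ∧
    (∀ x : C, ∃ γ : Γ, dist x (ι γ) ≤ 1 / 2)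

/-- An `α`-HT (`α`-hyperbolically thick) action: an isometric action on a δ-hyperbolic
space all of whose nontrivial elements have stable displacement at least `α`. -/
def IsHTAction (Γ X : Type*) [Group Γ] [MetricSpace X] [MulAction Γ X] (δ α : ℝ) : Prop :=
  IsDeltaHyperbolic X δ ∧ IsIsometricAction Γ X ∧
    ∀ γ : Γ, γ ≠ 1 → ∀ x : X, α ≤ stableDisp γ x

/-- Witness of an `α`-HT action of `Γ` on some δ-hyperbolic space. -/
structure HTWitness (Γ : Type*) [Group Γ] (δ α : ℝ) where
  X : Type
  [ms : MetricSpace X]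
  [ma : MulAction Γ X]
  cond : IsHTAction Γ X δ α

/-- A `(δ,α)`-HT group: non-cyclic, admitting an `α`-HT isometric action on some
δ-hyperbolic space. -/
def IsHTGroup (Γ : Type*) [Group Γ] (δ α : ℝ) : Prop :=
  ¬ IsCyclic Γ ∧ Nonempty (HTWitness Γ δ α)

/-- Witness for the `(δ,α)`-non-abelian condition on a non-commuting pair `a, b`:
a morphism from `⟨a,b⟩` to a `(δ,α)`-HT group whose image is isomorphic neither to the
trivial group nor to `ℤ`. -/
structure NonAbWitness {Γ : Type*} [Group Γ] (δ α : ℝ) (a b : Γ) where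
  G : Type
  [grp : Group G]
  ρ : ↥(Subgroup.closure ({a, b} : Set Γ)) →* G
  ht : IsHTGroup G δ α
  ntriv : ρ.range ≠ ⊥
  notZ : ¬ Nonempty (↥ρ.range ≃* Multiplicative ℤ)

/-- A `(δ,α)`-non-abelian group. -/
def NonAbelianDA (Γ : Type*) [Group Γ] (δ α : ℝ) : Prop :=
  (∃ a b : Γ, a * b ≠ b * a) ∧
    ∀ a b : Γ, a * b ≠ b * a → Nonempty (NonAbWitness δ α a b)

/-- A `(δ,α)`-transitive non-abelian group: `(δ,α)`-non-abelian, and commutation is a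
transitive relation on `Γ \ {1}`. -/
def TransNonAbelianDA (Γ : Type*) [Group Γ] (δ α : ℝ) : Prop :=
  NonAbelianDA Γ δ α ∧
    ∀ a b c : Γ, a ≠ 1 → b ≠ 1 → c ≠ 1 → a * b = b * a → b * c = c * b → a * c = c * a

/-- Extended-real logarithm of an extended nonnegative real. -/
def ennlog (x : ENNReal) : EReal :=
  if x = 0 then ⊥ else if x = ⊤ then ⊤ else ((Real.log x.toReal : ℝ) : EReal)

/-- The entropy of a metric measure space,
`Ent(Y,d,μ) = liminf_{R→∞} (1/R) ln μ(B(y,R))`, valued in `EReal`. -/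
def mmEntropy {Y : Type*} [MetricSpace Y] [MeasurableSpace Y] (μ : MeasureTheory.Measure Y) (y : Y) : EReal :=
  liminf (fun R : ℝ => ((R⁻¹ : ℝ) : EReal) * ennlog (μ (Metric.ball y R))) atTop


lemma IsGeodesicSegment.symm' {X : Type*} [MetricSpace X] {f : ℝ → X} {x y : X}
    (h : IsGeodesicSegment f x y) :
    IsGeodesicSegment (fun u => f (dist x y - u)) y x := by
  obtain ⟨h0, h1, h2⟩ := h
  have hdc : dist y x = dist x y := dist_comm y x
  refine ⟨by simpa using h1, ?_, ?_⟩
  · simp [hdc, h0]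
  · intro s hs t ht
    rw [hdc] at hs ht
    have := h2 (dist x y - s) ⟨by linarith [hs.2], by linarith [hs.1]⟩
      (dist x y - t) ⟨by linarith [ht.2], by linarith [ht.1]⟩
    rw [this, abs_sub_comm]
    ring_nf

end
/-- the intersection of two balls in a δ-hyperbolic space is contained
in a ball of controlled radius. -/
theorem ball_inter_ball_subset_ball
    {X : Type*} [MetricSpace X] (δ : ℝ) (hδ : 0 < δ) (hX : IsDeltaHyperbolic X δ)
    (R R' : ℝ) (hR : 0 < R) (hR' : 0 < R') (x y : X) (hxy : dist x y < R + R') :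
    ∃ y' : X, Metric.ball x R ∩ Metric.ball y R' ⊆
      Metric.ball y' (min R (min R' ((R + R' - dist x y) / 2 + 2 * δ))) := by
  obtain ⟨hprop, hgeo, hthin⟩ := hX
  set d := dist x y with hd
  set m3 : ℝ := (R + R' - d) / 2 + 2 * δ with hm3
  by_cases h1 : R ≤ R' ∧ R ≤ m3
  · refine ⟨x, fun z hz => ?_⟩
    have hz1 : dist z x < R := hz.1
    exact lt_min hz1 (lt_min (hz1.trans_le h1.1) (hz1.trans_le h1.2))
  by_cases h2 : R' ≤ R ∧ R' ≤ m3
  · refine ⟨y, fun z hz => ?_⟩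
    have hz2 : dist z y < R' := hz.2
    exact lt_min (hz2.trans_le h2.1) (lt_min hz2 (hz2.trans_le h2.2))
  push_neg at h1 h2
  have hmm : m3 < R ∧ m3 < R' := by
    rcases le_total R R' with h | h
    · exact ⟨h1 h, (h1 h).trans_le h⟩
    · exact ⟨(h2 h).trans_le h, h2 h⟩
  obtain ⟨hm3R, hm3R'⟩ := hmm
  obtain ⟨f, hf⟩ := hgeo x y
  set s : ℝ := δ + R - m3 with hs
  refine ⟨f s, fun z hz => ?_⟩
  obtain ⟨hz1, hz2⟩ := hz
  rw [Metric.mem_ball] at hz1 hz2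
  rw [Metric.mem_ball]
  have hd0 : (0:ℝ) ≤ d := dist_nonneg
  have hs0 : 0 ≤ s := by simp only [hs]; linarith
  have hsd : s ≤ d := by simp only [hs, hm3]; simp only [hm3] at hm3R'; linarith
  suffices h : dist z (f s) < m3 from
    lt_min (h.trans hm3R) (lt_min (h.trans hm3R') h)
  have hdxz : dist x z = dist z x := dist_comm x z
  have hdyz : dist y z = dist z y := dist_comm y z
  by_cases hcase : s ≤ gromovProd x y z
  · obtain ⟨g, hg⟩ := hgeo x z
    have hthin1 := hthin x y z f g hf hg s hs0 hcase
    have hpx : gromovProd x y z ≤ dist x z := by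
      have htri : dist x y ≤ dist x z + dist z y := dist_triangle x z y
      simp only [gromovProd]
      linarith [dist_comm z y, htri]
    have hsxz : s ≤ dist x z := hcase.trans hpx
    have hgz : dist (g s) z = dist x z - s := by
      have h3 := hg.2.2 s ⟨hs0, hsxz⟩ (dist x z) ⟨dist_nonneg, le_refl _⟩
      rw [hg.2.1] at h3
      rw [h3, abs_of_nonpos (by linarith)]
      ring
    have htr := dist_triangle z (g s) (f s)
    have : dist (g s) (f s) = dist (f s) (g s) := dist_comm _ _
    have : dist z (g s) = dist (g s) z := dist_comm _ _
    simp only [hs] at *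
    linarith [dist_comm z (g s), dist_comm (g s) (f s)]
  · push_neg at hcase
    have hf' : IsGeodesicSegment (fun u => f (d - u)) y x := hf.symm'
    obtain ⟨g, hg⟩ := hgeo y z
    set t : ℝ := d - s with hts
    have ht0 : 0 ≤ t := by simp only [hts]; linarith
    have htp : t ≤ gromovProd y x z := by
      simp only [gromovProd] at hcase ⊢
      have h4 : dist y x = dist x y := dist_comm y x
      have h5 : dist y z = dist z y := dist_comm y z
      have h6 : dist x z = dist z x := dist_comm x z
      simp only [hts]
      linarith
    have hthin2 := hthin y x z (fun u => f (d - u)) g hf' hg t ht0 htp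
    have hdt : d - t = s := by simp only [hts]; ring
    rw [hdt] at hthin2
    have hpy : gromovProd y x z ≤ dist y z := by
      have htri : dist y x ≤ dist y z + dist z x := dist_triangle y z x
      simp only [gromovProd]
      linarith
    have htyz : t ≤ dist y z := htp.trans hpy
    have hgz : dist (g t) z = dist y z - t := by
      have h3 := hg.2.2 t ⟨ht0, htyz⟩ (dist y z) ⟨dist_nonneg, le_refl _⟩
      rw [hg.2.1] at h3
      rw [h3, abs_of_nonpos (by linarith)]
      ring
    have htr := dist_triangle z (g t) (f s)
    have hm3' : m3 = (R + R' - d) / 2 + 2 * δ := rfl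
    have hs' : s = δ + R - m3 := rfl
    have hts' : t = d - s := rfl
    clear_value t s m3 d
    linarith [dist_comm z (g t), dist_comm (g t) (f s), hm3', hs', hts', htr, hgz, hthin2, hdyz, hz2, hδ]
end

section
/- Let (X,d) be a δ-hyperbolic space and let a, b be isometries of (X,d). (i) If there exists a point x ∈ X such that d(aᵖx, b^q x) > max( d(x,aᵖx), d(x,b^q x) ) + 2δ for all pairs (p,q) of nonzero integers, then a and b generate a free subgroup of the isometry group of (X,d), free on {a,b}. (ii) If there exists x ∈ X such that this inequality holds for all pairs (p,q) of nonzero integers that are not both negative, then the semigroup generated by {a,b} is free. -/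
open Metric Filter Set
open scoped Classical ENNReal

/-! Say that `z` lies in the shadow of `y` seen from `x` when `(z|y)_x ≥ d(x,y)/2`. An isometry
`g` maps the complement of the shadow of `g⁻¹x` into the shadow of `gx`, and thinness of
triangles makes the shadows of `y` and `y'` disjoint as soon as
`d(y,y') > max (d(x,y), d(x,y')) + 2δ`. So the unions of the shadows of the points `aᵖx` and of
the points `b^q x` are ping-pong sets for the powers of `a` and `b`, and freeness follows from the
ping-pong lemma. -/

open scoped Pointwise Function
open Function

namespace FreeGroup

theorem injective_lift_of_ping_pong_zpow {ι G α : Type*} [Nontrivial ι] [Group G]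
    [MulAction G α] (F : ι → G) (X : ι → Set α) (hne : ∀ i, (X i).Nonempty)
    (hdisj : Pairwise (Disjoint on X))
    (hpp : Pairwise fun i j => ∀ n : ℤ, n ≠ 0 → F i ^ n • X j ⊆ X i) :
    Injective (FreeGroup.lift F) := by
  have hlift : FreeGroup.lift F = (Monoid.CoprodI.lift fun i => FreeGroup.lift fun _ => F i).comp
      freeGroupEquivCoprodI.toMonoidHom := by
    ext i; simp
  rw [hlift, MonoidHom.coe_comp]
  refine Injective.comp ?_ freeGroupEquivCoprodI.injective
  refine Monoid.CoprodI.lift_injective_of_ping_pong _ ?_ X hne hdisj ?_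
  · obtain ⟨i⟩ := (inferInstance : Nonempty ι)
    refine .inr ⟨i, ?_⟩
    rw [freeGroupUnitEquivInt.cardinal_eq, Cardinal.mk_denumerable]
    exact Cardinal.natCast_le_aleph0
  · intro i j hij h h1
    obtain ⟨n, rfl⟩ : ∃ n : ℤ, FreeGroup.of () ^ n = h :=
      ⟨_, freeGroupUnitEquivInt.symm_apply_apply h⟩
    have hn : n ≠ 0 := by rintro rfl; exact h1 (zpow_zero _)
    simpa using hpp hij n hn

end FreeGroup

namespace FreeMonoid

variable {ι M α : Type*} [Monoid M] [MulAction M α] (F : ι → M) (x : α)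

theorem lift_of_mul_smul_mem (T : ι → Set α) (hx : ∀ i, F i • x ∈ T i)
    (hpp : ∀ i j, F i • T j ⊆ T i) (i : ι) (w : FreeMonoid ι) :
    lift F (of i * w) • x ∈ T i := by
  induction w using FreeMonoid.inductionOn' generalizing i with
  | one => simpa using hx i
  | of_mul j w ih =>
    rw [map_mul, lift_eval_of, mul_smul]
    exact hpp i j (Set.smul_mem_smul_set (ih j))

variable [Nontrivial ι] [IsLeftCancelMul M]

theorem injective_lift_of_ping_pong (T : ι → Set α) (hdisj : Pairwise (Disjoint on T))
    (hx : ∀ i, F i • x ∈ T i) (hpp : ∀ i j, F i • T j ⊆ T i) : Injective (lift F) := by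
  have head_eq : ∀ i j u v, lift F (of i * u) = lift F (of j * v) → i = j := by
    intro i j u v h
    by_contra hij
    exact (hdisj hij).ne_of_mem (lift_of_mul_smul_mem F x T hx hpp i u)
      (lift_of_mul_smul_mem F x T hx hpp j v) (by rw [h])
  -- Appending a letter `j ≠ i` to a word `i ⋯` of image `1` gives a word with the image of `j`.
  have ne_one : ∀ i u, lift F (of i * u) ≠ 1 := by
    intro i u h
    obtain ⟨j, hj⟩ := exists_ne i
    refine hj (head_eq i j (u * of j) 1 ?_).symm
    rw [← mul_assoc, map_mul, h, one_mul, mul_one]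
  intro u
  induction u using FreeMonoid.inductionOn' with
  | one =>
    intro v h
    cases v with
    | one => rfl
    | of_mul j v => exact absurd (h.symm.trans (map_one _)) (ne_one j v)
  | of_mul i u ih =>
    intro v h
    cases v with
    | one => exact absurd (h.trans (map_one _)) (ne_one i u)
    | of_mul j v =>
      obtain rfl := head_eq i j u v h
      rw [map_mul, map_mul] at h
      rw [ih (mul_left_cancel h)]

theorem injective_lift_of_ping_pong_pow (U : ι → Set α) (hdisj : Pairwise (Disjoint on U))
    (hx : ∀ i, ∀ n : ℕ, 0 < n → F i ^ n • x ∈ U i)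
    (hpp : Pairwise fun i j => ∀ n : ℕ, 0 < n → F i ^ n • U j ⊆ U i) :
    Injective (lift F) := by
  -- `T i ⊆ U i` is stable under `F i`: ping-pong with blocks becomes ping-pong with letters.
  let T : ι → Set α := fun i =>
    {y | ∃ n : ℕ, 0 < n ∧ (y = F i ^ n • x ∨ ∃ j ≠ i, y ∈ F i ^ n • U j)}
  have hTU : ∀ i, T i ⊆ U i := by
    rintro i y ⟨n, hn, rfl | ⟨j, hji, hy⟩⟩
    · exact hx i n hn
    · exact hpp hji.symm n hn hy
  refine injective_lift_of_ping_pong F x T (fun i j hij => (hdisj hij).mono (hTU i) (hTU j))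
    (fun i => ⟨1, one_pos, .inl (by rw [pow_one])⟩) ?_
  rintro i j _ ⟨y, hy, rfl⟩
  by_cases hji : j = i
  · subst hji
    obtain ⟨n, hn, rfl | ⟨k, hkj, z, hz, rfl⟩⟩ := hy
    · exact ⟨n + 1, n.succ_pos, .inl (by rw [pow_succ', mul_smul])⟩
    · exact ⟨n + 1, n.succ_pos, .inr ⟨k, hkj, z, hz, by simp only [pow_succ', mul_smul]⟩⟩
  · exact ⟨1, one_pos, .inr ⟨j, hji, y, hTU j hy, by rw [pow_one]⟩⟩

end FreeMonoid

section Shadow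

variable {X : Type*} [MetricSpace X]

theorem gromovProd_nonneg (w x y : X) : 0 ≤ gromovProd w x y := by
  have := dist_triangle_left x y w
  unfold gromovProd; linarith

theorem gromovProd_le_dist_left (w x y : X) : gromovProd w x y ≤ dist w x := by
  have := dist_triangle w x y
  unfold gromovProd; linarith

theorem gromovProd_le_dist_right (w x y : X) : gromovProd w x y ≤ dist w y := by
  have := dist_triangle_right w x y
  unfold gromovProd; linarith

theorem IsGeodesicSegment.dist_apply_right {f : ℝ → X} {x y : X} (hf : IsGeodesicSegment f x y)
    {t : ℝ} (ht₀ : 0 ≤ t) (ht : t ≤ dist x y) : dist (f t) y = dist x y - t := by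
  obtain ⟨-, hfy, hiso⟩ := hf
  have := hiso t ⟨ht₀, ht⟩ (dist x y) ⟨dist_nonneg, le_rfl⟩
  rw [hfy, abs_of_nonpos (by linarith)] at this
  linarith

/-- The four-point condition. -/
theorem IsDeltaHyperbolic.min_sub_le_gromovProd {δ : ℝ} (hX : IsDeltaHyperbolic X δ)
    (w x y z : X) : min (gromovProd w x y) (gromovProd w y z) - δ ≤ gromovProd w x z := by
  obtain ⟨-, hgeo, hthin⟩ := hX
  obtain ⟨f, hf⟩ := hgeo w x
  obtain ⟨g, hg⟩ := hgeo w y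
  obtain ⟨h, hh⟩ := hgeo w z
  set t := min (gromovProd w x y) (gromovProd w y z)
  have ht₀ : 0 ≤ t := le_min (gromovProd_nonneg _ _ _) (gromovProd_nonneg _ _ _)
  have hfg : dist (f t) (g t) ≤ δ := hthin w x y f g hf hg t ht₀ (min_le_left _ _)
  have hgh : dist (g t) (h t) ≤ δ := hthin w y z g h hg hh t ht₀ (min_le_right _ _)
  have hfx := hf.dist_apply_right ht₀ ((min_le_left _ _).trans (gromovProd_le_dist_left w x y))
  have hhz := hh.dist_apply_right ht₀ ((min_le_right _ _).trans (gromovProd_le_dist_right w y z))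
  have hxz : dist x z ≤ dist (f t) x + (dist (f t) (g t) + dist (g t) (h t)) + dist (h t) z := by
    calc dist x z ≤ dist x (f t) + dist (f t) (h t) + dist (h t) z := dist_triangle4 _ _ _ _
      _ ≤ _ := by rw [dist_comm x]; gcongr; exact dist_triangle _ _ _
  unfold gromovProd
  linarith

def shadow (x y : X) : Set X := {z | dist x y / 2 ≤ gromovProd x z y}

theorem mem_shadow_self (x y : X) : y ∈ shadow x y := by
  change dist x y / 2 ≤ (dist x y + dist x y - dist y y) / 2
  rw [dist_self]
  linarith [dist_nonneg (x := x) (y := y)]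

theorem IsDeltaHyperbolic.disjoint_shadow {δ : ℝ} (hX : IsDeltaHyperbolic X δ) {x y y' : X}
    (h : max (dist x y) (dist x y') + 2 * δ < dist y y') :
    Disjoint (shadow x y) (shadow x y') := by
  rw [Set.disjoint_left]
  intro z (hy : dist x y / 2 ≤ gromovProd x z y) (hy' : dist x y' / 2 ≤ gromovProd x z y')
  have hyz : gromovProd x y z = gromovProd x z y := by
    unfold gromovProd; rw [dist_comm y z]; ring
  have hmin : min (dist x y) (dist x y') / 2 ≤ min (gromovProd x y z) (gromovProd x z y') :=
    le_min (by rw [hyz]; linarith [min_le_left (dist x y) (dist x y')])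
      (by linarith [min_le_right (dist x y) (dist x y')])
  have hyy' : gromovProd x y y' < min (dist x y) (dist x y') / 2 - δ := by
    unfold gromovProd; linarith [min_add_max (dist x y) (dist x y')]
  linarith [hX.min_sub_le_gromovProd x y z y']

-- `(g z | g x)_x + (z | g⁻¹ x)_x = d(x, g x)`.
theorem IsometryEquiv.apply_mem_shadow {g : X ≃ᵢ X} {x z : X} (hz : z ∉ shadow x (g⁻¹ x)) :
    g z ∈ shadow x (g x) := by
  change ¬ dist x (g⁻¹ x) / 2 ≤ gromovProd x z (g⁻¹ x) at hz
  change dist x (g x) / 2 ≤ gromovProd x (g z) (g x)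
  have h₁ : dist x (g z) = dist (g⁻¹ x) z := by
    rw [← g⁻¹.dist_eq, inv_apply_self]
  have h₂ : dist (g z) (g x) = dist z x := g.dist_eq z x
  have h₃ : dist x (g⁻¹ x) = dist x (g x) := by
    rw [← g.dist_eq, apply_inv_self, dist_comm]
  unfold gromovProd at hz ⊢
  rw [dist_comm (g⁻¹ x) z] at h₁
  rw [dist_comm z x] at h₂
  linarith

end Shadow

instance IsometryEquiv.applyMulAction {X : Type*} [MetricSpace X] : MulAction (X ≃ᵢ X) X where
  smul e x := e x
  one_smul _ := rfl
  mul_smul _ _ _ := rfl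

section PingPong

variable {X : Type*} [MetricSpace X] {δ : ℝ} {a b : X ≃ᵢ X} {x : X}

theorem IsDeltaHyperbolic.disjoint_shadow_zpow (hX : IsDeltaHyperbolic X δ)
    {P : ℤ → ℤ → Prop} (hP : ∀ p q, P p q → P q p)
    (h : ∀ p q : ℤ, p ≠ 0 → q ≠ 0 → P p q →
      max (dist x ((a ^ p) x)) (dist x ((b ^ q) x)) + 2 * δ < dist ((a ^ p) x) ((b ^ q) x))
    {c c' : Bool} (hc : c ≠ c') {p q : ℤ} (hp : p ≠ 0) (hq : q ≠ 0) (hpq : P p q) :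
    Disjoint (shadow x (((bif c then a else b) ^ p) x))
      (shadow x (((bif c' then a else b) ^ q) x)) := by
  cases c <;> cases c' <;> simp only [ne_eq, not_true_eq_false] at hc
  · exact (hX.disjoint_shadow (h q p hq hp (hP p q hpq))).symm
  · exact hX.disjoint_shadow (h p q hp hq hpq)

theorem IsDeltaHyperbolic.freeGroupPair (hX : IsDeltaHyperbolic X δ)
    (h : ∀ p q : ℤ, p ≠ 0 → q ≠ 0 →
      max (dist x ((a ^ p) x)) (dist x ((b ^ q) x)) + 2 * δ < dist ((a ^ p) x) ((b ^ q) x)) :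
    FreeGroupPair a b := by
  set F : Bool → X ≃ᵢ X := fun c => bif c then a else b
  have hsep {c c' : Bool} (hc : c ≠ c') {p q : ℤ} (hp : p ≠ 0) (hq : q ≠ 0) :
      Disjoint (shadow x ((F c ^ p) x)) (shadow x ((F c' ^ q) x)) :=
    hX.disjoint_shadow_zpow (P := fun _ _ => True) (fun _ _ _ => trivial)
      (fun p q hp hq _ => h p q hp hq) hc hp hq trivial
  refine FreeGroup.injective_lift_of_ping_pong_zpow F
    (fun c => ⋃ (n : ℤ) (_ : n ≠ 0), shadow x ((F c ^ n) x))
    (fun c => ⟨(F c ^ (1 : ℤ)) x, Set.mem_biUnion one_ne_zero (mem_shadow_self _ _)⟩)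
    (fun c c' hc => ?_) (fun c c' hc n hn => ?_)
  · exact Set.disjoint_iUnion₂_left.2 fun p hp =>
      Set.disjoint_iUnion₂_right.2 fun q hq => hsep hc hp hq
  · rintro _ ⟨z, hz, rfl⟩
    obtain ⟨k, hk, hz⟩ := Set.mem_iUnion₂.1 hz
    refine Set.mem_biUnion hn (IsometryEquiv.apply_mem_shadow fun hz' => ?_)
    rw [← zpow_neg] at hz'
    exact (hsep hc (neg_ne_zero.2 hn) hk).ne_of_mem hz' hz rfl

theorem IsDeltaHyperbolic.freeSemigroupPair (hX : IsDeltaHyperbolic X δ)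
    (h : ∀ p q : ℤ, p ≠ 0 → q ≠ 0 → ¬ (p < 0 ∧ q < 0) →
      max (dist x ((a ^ p) x)) (dist x ((b ^ q) x)) + 2 * δ < dist ((a ^ p) x) ((b ^ q) x)) :
    FreeSemigroupPair a b := by
  set F : Bool → X ≃ᵢ X := fun c => bif c then a else b
  have hsep {c c' : Bool} (hc : c ≠ c') {p q : ℤ} (hp : p ≠ 0) (hq : q ≠ 0)
      (hpq : ¬ (p < 0 ∧ q < 0)) :
      Disjoint (shadow x ((F c ^ p) x)) (shadow x ((F c' ^ q) x)) :=
    hX.disjoint_shadow_zpow (fun p q hpq hqp => hpq ⟨hqp.2, hqp.1⟩) h hc hp hq hpq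
  refine FreeMonoid.injective_lift_of_ping_pong_pow F x
    (fun c => ⋃ (n : ℕ) (_ : 0 < n), shadow x ((F c ^ (n : ℤ)) x)) (fun c c' hc => ?_)
    (fun c n hn => Set.mem_biUnion hn (by rw [zpow_natCast]; exact mem_shadow_self x _))
    (fun c c' hc n hn => ?_)
  · exact Set.disjoint_iUnion₂_left.2 fun p hp => Set.disjoint_iUnion₂_right.2 fun q hq =>
      hsep hc (by positivity) (by positivity) (by omega)
  · rintro _ ⟨z, hz, rfl⟩
    obtain ⟨k, hk, hz⟩ := Set.mem_iUnion₂.1 hz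
    refine Set.mem_biUnion hn ?_
    rw [zpow_natCast]
    refine IsometryEquiv.apply_mem_shadow fun hz' => ?_
    rw [← zpow_natCast, ← zpow_neg] at hz'
    exact (hsep hc (by omega) (by positivity) (by omega)).ne_of_mem hz' hz rfl

end PingPong

theorem pingpong_freeness_general
    {X : Type*} [MetricSpace X] (δ : ℝ) (hX : IsDeltaHyperbolic X δ)
    (a b : X ≃ᵢ X) :
    ((∃ x : X, ∀ p q : ℤ, p ≠ 0 → q ≠ 0 →
        max (dist x ((a ^ p) x)) (dist x ((b ^ q) x)) + 2 * δ < dist ((a ^ p) x) ((b ^ q) x)) →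
      FreeGroupPair a b) ∧
    ((∃ x : X, ∀ p q : ℤ, p ≠ 0 → q ≠ 0 → ¬ (p < 0 ∧ q < 0) →
        max (dist x ((a ^ p) x)) (dist x ((b ^ q) x)) + 2 * δ < dist ((a ^ p) x) ((b ^ q) x)) →
      FreeSemigroupPair a b) :=
  ⟨fun ⟨_, h⟩ => hX.freeGroupPair h, fun ⟨_, h⟩ => hX.freeSemigroupPair h⟩

/-- ping-pong criterion for freeness of the (semi)group generated by
two isometries of a δ-hyperbolic space. -/
theorem pingpong_freeness
    {X : Type*} [MetricSpace X] (δ : ℝ) (hδ : 0 < δ) (hX : IsDeltaHyperbolic X δ)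
    (a b : X ≃ᵢ X) :
    ((∃ x : X, ∀ p q : ℤ, p ≠ 0 → q ≠ 0 →
        max (dist x ((a ^ p) x)) (dist x ((b ^ q) x)) + 2 * δ < dist ((a ^ p) x) ((b ^ q) x)) →
      FreeGroupPair a b) ∧
    ((∃ x : X, ∀ p q : ℤ, p ≠ 0 → q ≠ 0 → ¬ (p < 0 ∧ q < 0) →
        max (dist x ((a ^ p) x)) (dist x ((b ^ q) x)) + 2 * δ < dist ((a ^ p) x) ((b ^ q) x)) →
      FreeSemigroupPair a b) :=
  pingpong_freeness_general δ hX a b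
end

section
/- Let L be a group generated by two elements γ₁, γ₂ such that one of the two semigroups generated by {γ₁,γ₂} or by {γ₁,γ₂⁻¹} is free; denote this free semigroup by L⁺. Let L act properly by isometries on a metric space (Y,d) and let μ be an L-invariant positive nonzero Borel measure on Y with Ent(Y,d,μ) ≤ H < ∞. Then no element of L⁺\{e} fixes a point of Y, and for every y ∈ Y: (i) Ent(Y,d,μ) · max( d(y,γ₁y), d(y,γ₂y) ) ≥ ln 2; (ii) min( d(y,γ₁y), d(y,γ₂y) ) > (1/H) · e^{ −H · max( d(y,γ₁y), d(y,γ₂y) ) }. -/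
open Metric Filter Set
open scoped Classical ENNReal

/-!
Properness makes point stabilisers finite, while a free semigroup is torsion-free, so no
nontrivial element of `L⁺` fixes a point.

For the bounds, weight the two letters of `L⁺` by the displacements `ℓᵢ = d(y, γᵢ y)`. If
`e^{-sℓ₁} + e^{-sℓ₂} ≥ 1`, splitting off the first letter shows that there are at least
`e^{s(R - max ℓᵢ)}` words of weight `≤ R`, and they map injectively to orbit points in
`B(y, R)`. Balls of a fixed radius around these orbit points all have the same measure and, by
properness, overlap with bounded multiplicity, so `μ(B(y, R))` grows at least like `e^{sR}`
and `s ≤ Ent`. Taking `s = ln 2 / max ℓᵢ` gives (i). By continuity in `s`, `Ent ≤ H` forces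
`e^{-Hℓ₁} + e^{-Hℓ₂} ≤ 1`, and then `e^{-H min ℓᵢ} ≤ 1 - e^{-H max ℓᵢ} < exp (-e^{-H max ℓᵢ})`
gives (ii).
-/

open Real MeasureTheory
open scoped Finset

section WeightedWords

variable {ι : Type*} {w : ι → ℝ}

variable (w) in
def weightedWords (L : ℝ) : Set (List ι) := {l | (l.map w).sum ≤ L}

theorem cons_mem_weightedWords {i : ι} {l : List ι} {L : ℝ} :
    i :: l ∈ weightedWords w L ↔ l ∈ weightedWords w (L - w i) := by
  simp only [weightedWords, mem_ofPred_eq, List.map_cons, List.sum_cons]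
  constructor <;> intro h <;> linarith

theorem weightedWords_finite [Finite ι] {m : ℝ} (hm : 0 < m) (hmw : ∀ i, m ≤ w i) (L : ℝ) :
    (weightedWords w L).Finite := by
  refine (List.finite_length_le ι ⌊L / m⌋₊).subset fun l hl => Nat.le_floor ?_
  have hlen : l.length * m ≤ (l.map w).sum := by
    simpa using List.card_nsmul_le_sum (l.map w) m (by simpa using fun i _ => hmw i)
  rw [le_div_iff₀ hm]
  exact hlen.trans hl

theorem exp_le_card_weightedWords [Fintype ι] {m M s : ℝ} (hm : 0 < m) (hmw : ∀ i, m ≤ w i)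
    (hwM : ∀ i, w i ≤ M) (hs : 0 ≤ s) (hsum : 1 ≤ ∑ i, exp (-(s * w i))) {L : ℝ} (hL : 0 ≤ L) :
    exp (s * (L - M)) ≤ Nat.card (weightedWords w L) := by
  have hfin (L : ℝ) : Finite (weightedWords w L) := (weightedWords_finite hm hmw L).to_subtype
  obtain ⟨n, hn⟩ := exists_nat_gt (L / m)
  rw [div_lt_iff₀ hm] at hn
  induction n generalizing L with
  | zero => rw [Nat.cast_zero, zero_mul] at hn; linarith
  | succ n ih =>
    rcases lt_or_ge L M with hLM | hML
    · have : Nonempty (weightedWords w L) := ⟨⟨[], hL⟩⟩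
      calc exp (s * (L - M)) ≤ 1 :=
            exp_le_one_iff.2 (mul_nonpos_of_nonneg_of_nonpos hs (by linarith))
        _ ≤ Nat.card (weightedWords w L) := by exact_mod_cast Nat.card_pos
    · let cons : (Σ i, weightedWords w (L - w i)) → weightedWords w L :=
        fun p => ⟨p.1 :: p.2, cons_mem_weightedWords.2 p.2.2⟩
      have hcons : Function.Injective cons := by
        rintro ⟨i, l, hl⟩ ⟨j, l', hl'⟩ h
        simp only [cons, Subtype.mk.injEq, List.cons.injEq] at h
        obtain ⟨rfl, rfl⟩ := h
        rfl
      calc exp (s * (L - M)) ≤ exp (s * (L - M)) * ∑ i, exp (-(s * w i)) :=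
            le_mul_of_one_le_right (exp_pos _).le hsum
        _ = ∑ i, exp (s * (L - w i - M)) := by
            rw [Finset.mul_sum]; congr 1; ext i; rw [← exp_add]; ring_nf
        _ ≤ ∑ i, (Nat.card (weightedWords w (L - w i)) : ℝ) := by
            gcongr with i
            have := hmw i
            exact ih (by linarith [hwM i]) (by push_cast at hn; linarith)
        _ = Nat.card (Σ i, weightedWords w (L - w i)) := by rw [Nat.card_sigma]; push_cast; rfl
        _ ≤ Nat.card (weightedWords w L) := by exact_mod_cast Nat.card_le_card_of_injective _ hcons

end WeightedWords

theorem FreeMonoid.not_isOfFinOrder_lift {α M : Type*} [Monoid M] {f : α → M}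
    (hf : Function.Injective (FreeMonoid.lift f)) {x : FreeMonoid α} (hx : x ≠ 1) :
    ¬IsOfFinOrder (FreeMonoid.lift f x) := fun h =>
  hx (isUnit_iff_eq_one.1 (hf.isOfFinOrder_iff.1 h).isUnit)

theorem FreeSemigroupPair.not_isOfFinOrder {G : Type*} [Monoid G] {u v g : G}
    (h : FreeSemigroupPair u v) (hg : g ∈ Submonoid.closure {u, v}) (hg1 : g ≠ 1) :
    ¬IsOfFinOrder g := by
  have hrange : ({u, v} : Set G) = range fun b => bif b then u else v := by
    rw [Bool.range_eq, Set.pair_comm]; rfl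
  rw [hrange, ← FreeMonoid.mrange_lift] at hg
  obtain ⟨x, rfl⟩ := hg
  exact FreeMonoid.not_isOfFinOrder_lift h (by rintro rfl; exact hg1 (map_one _))

theorem FreeSemigroupPair.not_isOfFinOrder_left {G : Type*} [Monoid G] {u v : G}
    (h : FreeSemigroupPair u v) : ¬IsOfFinOrder u := by
  simpa using FreeMonoid.not_isOfFinOrder_lift h (FreeMonoid.of_ne_one true)

section Action

variable {Γ Y : Type*} [Group Γ] [MetricSpace Y] [MulAction Γ Y]

theorem IsProperAction.isOfFinOrder_of_smul_eq (hproper : IsProperAction Γ Y) {g : Γ} {y : Y}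
    (h : g • y = y) : IsOfFinOrder g := by
  refine finite_powers.1 ((hproper y 0).subset ?_)
  rintro _ ⟨n, rfl⟩
  have : g ^ n • y = y := (MulAction.stabilizer Γ y).pow_mem h n
  simp [this]

theorem IsProperAction.dist_smul_pos (hproper : IsProperAction Γ Y) {g : Γ}
    (hg : ¬IsOfFinOrder g) (y : Y) : 0 < dist y (g • y) :=
  dist_pos.2 fun h => hg (hproper.isOfFinOrder_of_smul_eq h.symm)

theorem IsIsometricAction.dist_inv_smul (hiso : IsIsometricAction Γ Y) (γ : Γ) (x z : Y) :
    dist (γ⁻¹ • x) z = dist x (γ • z) := by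
  rw [← (hiso γ).dist_eq, smul_inv_smul]

theorem IsIsometricAction.dist_smul_list_prod_le {ι : Type*} (hiso : IsIsometricAction Γ Y)
    (g : ι → Γ) (y : Y) (l : List ι) :
    dist y ((l.map g).prod • y) ≤ (l.map fun i => dist y (g i • y)).sum := by
  induction l with
  | nil => simp
  | cons i l ih =>
    calc dist y ((g i * (l.map g).prod) • y)
        ≤ dist y (g i • y) + dist (g i • y) (g i • (l.map g).prod • y) := by
          rw [mul_smul]; exact dist_triangle _ _ _
      _ ≤ _ := by simpa [(hiso (g i)).dist_eq] using ih

theorem IsIsometricAction.card_filter_mem_ball_le (hiso : IsIsometricAction Γ Y)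
    (hproper : IsProperAction Γ Y) (F : Finset Γ) (y z : Y) (r : ℝ) :
    #{γ ∈ F | z ∈ ball (γ • y) r} ≤ {γ : Γ | dist y (γ • y) ≤ 2 * r}.ncard := by
  rcases Finset.eq_empty_or_nonempty {γ ∈ F | z ∈ ball (γ • y) r} with h | ⟨γ₀, hγ₀⟩
  · rw [h, Finset.card_empty]; exact Nat.zero_le _
  rw [Finset.mem_filter, mem_ball] at hγ₀
  rw [← Set.ncard_coe_finset]
  refine Set.ncard_le_ncard_of_injOn (γ₀⁻¹ * ·) (fun γ hγ => ?_) (mul_right_injective _).injOn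
    (hproper y _)
  rw [Finset.coe_filter, mem_ofPred_eq, mem_ball] at hγ
  rw [mem_ofPred_eq, mul_smul, ← hiso.dist_inv_smul, inv_inv]
  linarith [dist_triangle_left (γ₀ • y) (γ • y) z, hγ.2, hγ₀.2]

end Action

theorem MeasureTheory.sum_measure_le_mul_measure_of_card_le {α ι : Type*} [MeasurableSpace α]
    {μ : Measure α} {s : Finset ι} {A : ι → Set α} {B : Set α}
    (hA : ∀ i ∈ s, MeasurableSet (A i)) (hB : MeasurableSet B) (hAB : ∀ i ∈ s, A i ⊆ B) {N : ℕ}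
    (hN : ∀ x, #{i ∈ s | x ∈ A i} ≤ N) :
    ∑ i ∈ s, μ (A i) ≤ N * μ B := by
  have hpt (x : α) : ∑ i ∈ s, (A i).indicator 1 x ≤ B.indicator (fun _ => (N : ℝ≥0∞)) x := by
    by_cases hx : x ∈ B
    · simp only [Set.indicator_apply, Pi.one_apply, Finset.sum_boole, if_pos hx]
      exact_mod_cast hN x
    · rw [Set.indicator_of_notMem hx, Finset.sum_eq_zero]
      exact fun i hi => Set.indicator_of_notMem (fun hxA => hx (hAB i hi hxA)) _
  calc ∑ i ∈ s, μ (A i) = ∑ i ∈ s, ∫⁻ x, (A i).indicator 1 x ∂μ :=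
        Finset.sum_congr rfl fun i hi => (lintegral_indicator_one (hA i hi)).symm
    _ = ∫⁻ x, ∑ i ∈ s, (A i).indicator 1 x ∂μ :=
        (lintegral_finsetSum s fun i hi => measurable_one.indicator (hA i hi)).symm
    _ ≤ ∫⁻ x, B.indicator (fun _ => (N : ℝ≥0∞)) x ∂μ := lintegral_mono hpt
    _ = N * μ B := lintegral_indicator_const hB _


theorem coe_log_le_ennlog {x : ℝ} {m : ℝ≥0∞} (hx : 0 < x) (h : ENNReal.ofReal x ≤ m) :
    ((log x : ℝ) : EReal) ≤ ennlog m := by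
  have hm : m ≠ 0 := (ENNReal.ofReal_pos.2 hx).trans_le h |>.ne'
  by_cases htop : m = ⊤
  · simp [ennlog, htop]
  · rw [ennlog, if_neg hm, if_neg htop]
    exact EReal.coe_le_coe_iff.2 (log_le_log hx ((ENNReal.ofReal_le_iff_le_toReal htop).1 h))

section Entropy

variable {Y : Type*} [MetricSpace Y] [MeasurableSpace Y] {μ : Measure Y} {y : Y}

theorem MeasureTheory.Measure.exists_measure_ball_ne_zero (hμ : μ ≠ 0) (y : Y) :
    ∃ n : ℕ, μ (ball y n) ≠ 0 := by
  by_contra! h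
  refine hμ (Measure.measure_univ_eq_zero.1 ?_)
  rw [← iUnion_ball_nat y]
  exact measure_iUnion_null h

theorem coe_le_mmEntropy_of_le_measure_ball {C s : ℝ} (hC : 0 < C)
    (h : ∀ᶠ R in atTop, ENNReal.ofReal (C * exp (s * R)) ≤ μ (ball y R)) :
    (s : EReal) ≤ mmEntropy μ y := by
  have hlim : Tendsto (fun R : ℝ => ((s + log C * R⁻¹ : ℝ) : EReal)) atTop (nhds s) :=
    EReal.tendsto_coe.2 (by simpa using tendsto_inv_atTop_zero.const_mul (log C) |>.const_add s)
  rw [← hlim.liminf_eq]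
  refine liminf_le_liminf ?_
  filter_upwards [h, eventually_gt_atTop 0] with R hR hR0
  calc ((s + log C * R⁻¹ : ℝ) : EReal) = ((R⁻¹ : ℝ) : EReal) * (log (C * exp (s * R)) : ℝ) := by
        rw [← EReal.coe_mul, log_mul hC.ne' (exp_pos _).ne', log_exp]
        congr 1
        field_simp
        ring
    _ ≤ ((R⁻¹ : ℝ) : EReal) * ennlog (μ (ball y R)) :=
        mul_le_mul_of_nonneg_left (coe_log_le_ennlog (by positivity) hR)
          (EReal.coe_nonneg.2 (inv_nonneg.2 hR0.le))

end Entropy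

section MeasuredAction

variable {Γ Y : Type*} [Group Γ] [MetricSpace Y] [MulAction Γ Y] [MeasurableSpace Y]
  [OpensMeasurableSpace Y] {μ : Measure Y}

theorem IsIsometricAction.measure_ball_smul (hiso : IsIsometricAction Γ Y)
    (hinv : ∀ γ : Γ, MeasurePreserving (fun y : Y => γ • y) μ μ) (γ : Γ) (y : Y) (r : ℝ) :
    μ (ball (γ • y) r) = μ (ball y r) := by
  have hpre : ball (γ • y) r = (fun z : Y => γ⁻¹ • z) ⁻¹' ball y r := by
    ext z; simp [hiso.dist_inv_smul]
  rw [hpre, (hinv γ⁻¹).measure_preimage measurableSet_ball.nullMeasurableSet]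

theorem IsIsometricAction.card_mul_measure_ball_le (hiso : IsIsometricAction Γ Y)
    (hinv : ∀ γ : Γ, MeasurePreserving (fun y : Y => γ • y) μ μ)
    (hproper : IsProperAction Γ Y) {F : Finset Γ} {y : Y} {L : ℝ}
    (hF : ∀ γ ∈ F, dist y (γ • y) ≤ L) (r : ℝ) :
    #F * μ (ball y r) ≤ {γ : Γ | dist y (γ • y) ≤ 2 * r}.ncard * μ (ball y (L + r)) := by
  calc #F * μ (ball y r) = ∑ γ ∈ F, μ (ball (γ • y) r) := by
        simp [hiso.measure_ball_smul hinv]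
    _ ≤ _ := by
      refine sum_measure_le_mul_measure_of_card_le (fun _ _ => measurableSet_ball)
        measurableSet_ball (fun γ hγ z hz => ?_) (hiso.card_filter_mem_ball_le hproper F y · r)
      rw [mem_ball] at hz ⊢
      linarith [dist_triangle_right z y (γ • y), hF γ hγ]

theorem IsIsometricAction.coe_le_mmEntropy_of_card_le (hiso : IsIsometricAction Γ Y)
    (hinv : ∀ γ : Γ, MeasurePreserving (fun y : Y => γ • y) μ μ) (hproper : IsProperAction Γ Y)
    (hμ : μ ≠ 0) {y : Y} {C s : ℝ} (hC : 0 < C)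
    (hF : ∀ L ≥ 0, ∃ F : Finset Γ, (∀ γ ∈ F, dist y (γ • y) ≤ L) ∧ C * exp (s * L) ≤ #F) :
    (s : EReal) ≤ mmEntropy μ y := by
  obtain ⟨n, hn⟩ := μ.exists_measure_ball_ne_zero hμ y
  -- `μ (ball y n)` may be infinite: compare with a finite positive `c` below it.
  obtain ⟨c, hc0, hc⟩ := ENNReal.lt_iff_exists_nnreal_btwn.1 (pos_iff_ne_zero.2 hn)
  set N := {γ : Γ | dist y (γ • y) ≤ 2 * n}.ncard
  have hN : 0 < N := (Set.ncard_pos (hproper y _)).2 ⟨1, by simp⟩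
  have hc_pos : (0 : ℝ) < c := by exact_mod_cast hc0
  refine coe_le_mmEntropy_of_le_measure_ball (C := C * c * exp (-(s * n)) / N) (by positivity) ?_
  filter_upwards [eventually_ge_atTop (n : ℝ)] with R hR
  obtain ⟨F, hFL, hFC⟩ := hF (R - n) (by linarith)
  have hpack := hiso.card_mul_measure_ball_le hinv hproper hFL n
  rw [sub_add_cancel] at hpack
  calc ENNReal.ofReal (C * c * exp (-(s * n)) / N * exp (s * R))
      = ENNReal.ofReal (C * exp (s * (R - n))) * c / N := by
        rw [← ENNReal.ofReal_coe_nnreal, ← ENNReal.ofReal_natCast,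
          ← ENNReal.ofReal_mul (by positivity),
          ← ENNReal.ofReal_div_of_pos (by exact_mod_cast hN)]
        congr 1
        rw [mul_sub, sub_eq_add_neg, exp_add]
        ring
    _ ≤ #F * μ (ball y n) / N := by
        gcongr
        rw [← ENNReal.ofReal_natCast]
        exact ENNReal.ofReal_le_ofReal hFC
    _ ≤ μ (ball y R) := ENNReal.div_le_of_le_mul' hpack

theorem IsIsometricAction.coe_le_mmEntropy_of_injective_lift {ι : Type*} [Fintype ι]
    (hiso : IsIsometricAction Γ Y) (hinv : ∀ γ : Γ, MeasurePreserving (fun y : Y => γ • y) μ μ)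
    (hproper : IsProperAction Γ Y) (hμ : μ ≠ 0) {g : ι → Γ}
    (hg : Function.Injective (FreeMonoid.lift g)) {y : Y} {s : ℝ} (hs : 0 ≤ s)
    (hsum : 1 ≤ ∑ i, exp (-(s * dist y (g i • y)))) :
    (s : EReal) ≤ mmEntropy μ y := by
  set w := fun i => dist y (g i • y)
  have hw (i : ι) : 0 < w i := hproper.dist_smul_pos
    (by simpa using FreeMonoid.not_isOfFinOrder_lift hg (FreeMonoid.of_ne_one i)) y
  obtain ⟨m, hm, hmw⟩ : ∃ m > 0, ∀ i, m ≤ w i := by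
    cases isEmpty_or_nonempty ι
    · exact ⟨1, one_pos, isEmptyElim⟩
    · obtain ⟨i₀, hi₀⟩ := Finite.exists_min w
      exact ⟨w i₀, hw i₀, hi₀⟩
  have hwM (i : ι) : w i ≤ ∑ j, w j :=
    Finset.single_le_sum (fun j _ => (hw j).le) (Finset.mem_univ i)
  let φ (l : List ι) : Γ := (l.map g).prod
  have hφ : Function.Injective φ := by
    convert hg.comp FreeMonoid.ofList.injective using 1
    ext l
    simp [φ, FreeMonoid.lift_apply]
  refine hiso.coe_le_mmEntropy_of_card_le hinv hproper hμ (exp_pos (-(s * ∑ j, w j)))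
    fun L hL => ⟨(weightedWords_finite hm hmw L).toFinset.image φ, ?_, ?_⟩
  · simp only [Finset.mem_image, Set.Finite.mem_toFinset, forall_exists_index, and_imp]
    rintro _ l hl rfl
    exact (hiso.dist_smul_list_prod_le g y l).trans hl
  · rw [Finset.card_image_of_injective _ hφ, ← Set.ncard_eq_toFinset_card _
      (weightedWords_finite hm hmw L), ← Nat.card_coe_set_eq, ← exp_add]
    convert exp_le_card_weightedWords hm hmw hwM hs hsum hL using 2
    ring

theorem FreeSemigroupPair.coe_le_mmEntropy {u v : Γ} (h : FreeSemigroupPair u v)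
    (hiso : IsIsometricAction Γ Y)
    (hinv : ∀ γ : Γ, MeasurePreserving (fun y : Y => γ • y) μ μ) (hproper : IsProperAction Γ Y)
    (hμ : μ ≠ 0) {y : Y} {s : ℝ} (hs : 0 ≤ s)
    (hsum : 1 ≤ exp (-(s * dist y (u • y))) + exp (-(s * dist y (v • y)))) :
    (s : EReal) ≤ mmEntropy μ y :=
  hiso.coe_le_mmEntropy_of_injective_lift hinv hproper hμ h hs (by simpa [add_comm] using hsum)

end MeasuredAction

/- In this section `E` stands for `Ent(Y, d, μ)` and `w₁, w₂` for the displacements of the two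
generators: `E` bounds every `s ≥ 0` with `e^{-s w₁} + e^{-s w₂} ≥ 1`. -/
section TwoWeights

variable {w₁ w₂ : ℝ} {E : EReal}

theorem coe_log_two_div_max_le (hM : 0 < max w₁ w₂)
    (hE : ∀ s : ℝ, 0 ≤ s → 1 ≤ exp (-(s * w₁)) + exp (-(s * w₂)) → (s : EReal) ≤ E) :
    ((log 2 / max w₁ w₂ : ℝ) : EReal) ≤ E := by
  have hhalf {w : ℝ} (hw : w ≤ max w₁ w₂) : 1 / 2 ≤ exp (-(log 2 / max w₁ w₂ * w)) := by
    calc (1 : ℝ) / 2 = exp (-(log 2 / max w₁ w₂ * max w₁ w₂)) := by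
          rw [div_mul_cancel₀ _ hM.ne', exp_neg, exp_log two_pos, one_div]
      _ ≤ _ := by gcongr
  exact hE _ (by positivity) (by linarith [hhalf (le_max_left w₁ w₂), hhalf (le_max_right w₁ w₂)])

theorem coe_log_two_le_mul_max (hM : 0 < max w₁ w₂)
    (hE : ∀ s : ℝ, 0 ≤ s → 1 ≤ exp (-(s * w₁)) + exp (-(s * w₂)) → (s : EReal) ≤ E) :
    ((log 2 : ℝ) : EReal) ≤ E * (max w₁ w₂ : ℝ) := by
  calc ((log 2 : ℝ) : EReal) = ((log 2 / max w₁ w₂ : ℝ) : EReal) * (max w₁ w₂ : ℝ) := by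
        rw [← EReal.coe_mul, div_mul_cancel₀ _ hM.ne']
    _ ≤ E * (max w₁ w₂ : ℝ) :=
        mul_le_mul_of_nonneg_right (coe_log_two_div_max_le hM hE) (EReal.coe_nonneg.2 hM.le)

theorem exp_neg_add_exp_neg_le_one {H : ℝ} (hH : 0 ≤ H)
    (hE : ∀ s : ℝ, 0 ≤ s → 1 ≤ exp (-(s * w₁)) + exp (-(s * w₂)) → (s : EReal) ≤ E)
    (hEH : E ≤ H) : exp (-(H * w₁)) + exp (-(H * w₂)) ≤ 1 := by
  by_contra! h
  have hcont : Continuous fun s : ℝ => exp (-(s * w₁)) + exp (-(s * w₂)) := by fun_prop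
  obtain ⟨s, hs1, hHs⟩ := ((continuousAt_const.eventually_lt hcont.continuousAt h).filter_mono
    nhdsWithin_le_nhds |>.and (self_mem_nhdsWithin : Ioi H ∈ nhdsWithin H (Ioi H))).exists
  have hsH : s ≤ H := EReal.coe_le_coe_iff.1 ((hE s (hH.trans hHs.le) hs1.le).trans hEH)
  exact absurd hHs (not_lt.2 hsH)

theorem inv_mul_exp_neg_mul_max_lt_min {H : ℝ} (hM : 0 < max w₁ w₂)
    (hE : ∀ s : ℝ, 0 ≤ s → 1 ≤ exp (-(s * w₁)) + exp (-(s * w₂)) → (s : EReal) ≤ E)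
    (hEH : E ≤ H) : 1 / H * exp (-H * max w₁ w₂) < min w₁ w₂ := by
  have hH : 0 < H := (div_pos (log_pos one_lt_two) hM).trans_le
    (EReal.coe_le_coe_iff.1 ((coe_log_two_div_max_le hM hE).trans hEH))
  have hsum : exp (-(H * min w₁ w₂)) + exp (-(H * max w₁ w₂)) ≤ 1 := by
    have := exp_neg_add_exp_neg_le_one hH.le hE hEH
    rcases le_total w₁ w₂ with h | h
    · simpa [min_eq_left h, max_eq_right h] using this
    · simpa [min_eq_right h, max_eq_left h, add_comm] using this
  set x := exp (-(H * max w₁ w₂))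
  have hx : 0 < x := exp_pos _
  have hlt : exp (-(H * min w₁ w₂)) < exp (-x) := by
    linarith [add_one_lt_exp (neg_ne_zero.2 hx.ne')]
  rw [neg_mul, one_div_mul_eq_div, div_lt_iff₀ hH]
  linarith [exp_lt_exp.1 hlt]

end TwoWeights

theorem free_semigroup_displacement_bounds_general
    {Γ : Type*} [Group Γ] {Y : Type*} [MetricSpace Y] [MeasurableSpace Y] [BorelSpace Y]
    [MulAction Γ Y]
    (γ₁ γ₂ : Γ)
    (c : Γ) (hc : c = γ₂ ∨ c = γ₂⁻¹) (hfree : FreeSemigroupPair γ₁ c)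
    (hiso : IsIsometricAction Γ Y) (hproper : IsProperAction Γ Y)
    (μ : MeasureTheory.Measure Y) (hμ : μ ≠ 0)
    (hinv : ∀ γ : Γ, MeasureTheory.MeasurePreserving (fun y : Y => γ • y) μ μ)
    (H : ℝ) (hent : ∀ y : Y, mmEntropy μ y ≤ (H : EReal)) :
    (∀ g ∈ Submonoid.closure ({γ₁, c} : Set Γ), g ≠ 1 → ∀ y : Y, g • y ≠ y) ∧
    ∀ y : Y,
      ((Real.log 2 : ℝ) : EReal) ≤
          mmEntropy μ y * ((max (dist y (γ₁ • y)) (dist y (γ₂ • y)) : ℝ) : EReal) ∧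
      1 / H * Real.exp (-H * max (dist y (γ₁ • y)) (dist y (γ₂ • y))) <
        min (dist y (γ₁ • y)) (dist y (γ₂ • y)) := by
  refine ⟨fun g hg hg1 y h => hfree.not_isOfFinOrder hg hg1 (hproper.isOfFinOrder_of_smul_eq h),
    fun y => ?_⟩
  have hdist : dist y (c • y) = dist y (γ₂ • y) := by
    rcases hc with rfl | rfl
    · rfl
    · rw [dist_comm, hiso.dist_inv_smul]
  have hE (s : ℝ) (hs : 0 ≤ s)
      (hsum : 1 ≤ exp (-(s * dist y (γ₁ • y))) + exp (-(s * dist y (γ₂ • y)))) :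
      (s : EReal) ≤ mmEntropy μ y :=
    hfree.coe_le_mmEntropy hiso hinv hproper hμ hs (hdist ▸ hsum)
  have hM : 0 < max (dist y (γ₁ • y)) (dist y (γ₂ • y)) :=
    lt_max_of_lt_left (hproper.dist_smul_pos hfree.not_isOfFinOrder_left y)
  exact ⟨coe_log_two_le_mul_max hM hE, inv_mul_exp_neg_mul_max_lt_min hM hE (hent y)⟩

/-- displacement bounds for the generators of a free semigroup acting
properly on a metric measure space of entropy at most `H`. -/
theorem free_semigroup_displacement_bounds
    {Γ : Type*} [Group Γ] {Y : Type*} [MetricSpace Y] [MeasurableSpace Y] [BorelSpace Y]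
    [MulAction Γ Y]
    (γ₁ γ₂ : Γ) (hgen : Subgroup.closure ({γ₁, γ₂} : Set Γ) = ⊤)
    (c : Γ) (hc : c = γ₂ ∨ c = γ₂⁻¹) (hfree : FreeSemigroupPair γ₁ c)
    (hiso : IsIsometricAction Γ Y) (hproper : IsProperAction Γ Y)
    (μ : MeasureTheory.Measure Y) (hμ : μ ≠ 0)
    (hinv : ∀ γ : Γ, MeasureTheory.MeasurePreserving (fun y : Y => γ • y) μ μ)
    (H : ℝ) (hent : ∀ y : Y, mmEntropy μ y ≤ (H : EReal)) :
    (∀ g ∈ Submonoid.closure ({γ₁, c} : Set Γ), g ≠ 1 → ∀ y : Y, g • y ≠ y) ∧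
    ∀ y : Y,
      ((Real.log 2 : ℝ) : EReal) ≤
          mmEntropy μ y * ((max (dist y (γ₁ • y)) (dist y (γ₂ • y)) : ℝ) : EReal) ∧
      1 / H * Real.exp (-H * max (dist y (γ₁ • y)) (dist y (γ₂ • y))) <
        min (dist y (γ₁ • y)) (dist y (γ₂ • y)) :=
  free_semigroup_displacement_bounds_general γ₁ γ₂ c hc hfree hiso hproper μ hμ hinv H hent
end
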